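/- Let ρ and σ be 𝕏×𝕏 Gram matrices. Then the Hadamard product fidelity and Hadamard product distance satisfy the Fuchs–van de Graaf inequalities: 1 − D_H(ρ,σ) ≤ F_H(ρ,σ) ≤ √(1 − D_H(ρ,σ)²). -/

import Mathlib

/-! For density matrices these are the Fuchs–van de Graaf inequalities. The lower bound follows
from the Powers–Størmer inequality `tr (√ρ - √σ)² ≤ ‖ρ - σ‖₁` and `Re tr (√σ √ρ) ≤ ‖√σ √ρ‖₁ = F`.
For the upper bound, polar decomposition gives a unitary `W` such that `X = √ρ`, `Y = √σ W*`
satisfy `X X* = ρ`, `Y Y* = σ` and `tr (Y* X) = F`; then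
`2 (ρ - σ) = (X - Y)(X + Y)* + (X + Y)(X - Y)*`, and Cauchy–Schwarz for the Hilbert–Schmidt
inner product bounds `‖ρ - σ‖₁` by `√(2 - 2F) √(2 + 2F)`.
By the Schur product theorem `ρ ∘ uu*` is a density matrix for every unit vector `u`, and both
inequalities survive passing to the infimum over `u` of the fidelity and the supremum of the
trace distance. -/

open scoped Matrix ComplexConjugate ComplexOrder

/-- The positive semidefinite square root of a matrix (junk value `0` if the matrix is
not positive semidefinite). -/
noncomputable def psqrt {m : Type*} [Fintype m] [DecidableEq m]
    (M : Matrix m m ℂ) : Matrix m m ℂ :=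
  open scoped Classical in
  if h : M.PosSemidef then
    (h.1.eigenvectorUnitary : Matrix m m ℂ) *
      Matrix.diagonal ((↑) ∘ (Real.sqrt ·) ∘ h.1.eigenvalues) *
      (star h.1.eigenvectorUnitary : Matrix m m ℂ)
  else 0

/-- The trace norm (sum of singular values) of a complex matrix: `tr √(Aᴴ A)`. -/
noncomputable def traceNorm {m : Type*} [Fintype m] [DecidableEq m]
    (M : Matrix m m ℂ) : ℝ :=
  (psqrt (M.conjTranspose * M)).trace.re

/-- The fidelity `F(ρ',σ') = tr √(√ρ' σ' √ρ')` between two density matrices. -/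
noncomputable def fidelity {m : Type*} [Fintype m] [DecidableEq m]
    (ρ' σ' : Matrix m m ℂ) : ℝ :=
  (psqrt (psqrt ρ' * σ' * psqrt ρ')).trace.re

/-- The trace distance `D(ρ',σ') = ½‖ρ' - σ'‖_tr` between two density matrices. -/
noncomputable def traceDist {m : Type*} [Fintype m] [DecidableEq m]
    (ρ' σ' : Matrix m m ℂ) : ℝ :=
  (1 / 2) * traceNorm (ρ' - σ')

/-- The rank-one matrix `u u*` associated to a vector `u : 𝕏 → ℂ`. -/
def outerMat {X : Type*} (u : X → ℂ) : Matrix X X ℂ :=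
  fun x y => u x * conj (u y)

/-- The Hadamard product fidelity between two Gram matrices. -/
noncomputable def FH {X : Type*} [Fintype X] [DecidableEq X] (ρ σ : Matrix X X ℂ) : ℝ :=
  ⨅ u : { u : X → ℂ // ∑ x, ‖u x‖ ^ 2 = 1 },
    fidelity (ρ ⊙ outerMat u.1) (σ ⊙ outerMat u.1)

/-- The Hadamard product distance between two Gram matrices. -/
noncomputable def DH {X : Type*} [Fintype X] [DecidableEq X] (ρ σ : Matrix X X ℂ) : ℝ :=
  ⨆ u : { u : X → ℂ // ∑ x, ‖u x‖ ^ 2 = 1 },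
    traceDist (ρ ⊙ outerMat u.1) (σ ⊙ outerMat u.1)

open scoped MatrixOrder
open Matrix

lemma LinearMap.exists_linearIsometry_apply_eq_of_norm_apply_eq {𝕜 V : Type*} [RCLike 𝕜]
    [NormedAddCommGroup V] [InnerProductSpace 𝕜 V] [FiniteDimensional 𝕜 V] {T S : V →ₗ[𝕜] V}
    (h : ∀ x, ‖T x‖ = ‖S x‖) : ∃ U : V →ₗᵢ[𝕜] V, ∀ x, U (S x) = T x := by
  have hker : LinearMap.ker S ≤ LinearMap.ker T := fun x hx => by
    rw [LinearMap.mem_ker, ← norm_eq_zero, h, norm_eq_zero]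
    exact hx
  let g : LinearMap.range S →ₗ[𝕜] V :=
    (LinearMap.ker S).liftQ T hker ∘ₗ S.quotKerEquivRange.symm.toLinearMap
  have hg : ∀ x, g ⟨S x, LinearMap.mem_range_self S x⟩ = T x := fun x => by
    simp [g]
  have hg_norm : ∀ y, ‖g y‖ = ‖y‖ := by
    rintro ⟨_, x, rfl⟩
    rw [hg, h]
    rfl
  exact ⟨LinearIsometry.extend ⟨g, hg_norm⟩, fun x =>
    (LinearIsometry.extend_apply _ ⟨S x, LinearMap.mem_range_self S x⟩).trans (hg x)⟩

lemma Matrix.PosSemidef.re_trace_nonneg {n : Type*} [Fintype n] {P : Matrix n n ℂ}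
    (hP : P.PosSemidef) : 0 ≤ P.trace.re :=
  (Complex.nonneg_iff.mp hP.trace_nonneg).1

section

variable {n : Type*} [Fintype n] [DecidableEq n]

lemma Matrix.exists_mem_unitaryGroup_mul_eq_of_conjTranspose_mul_self_eq {M P : Matrix n n ℂ}
    (h : Mᴴ * M = Pᴴ * P) : ∃ U ∈ unitaryGroup n ℂ, M = U * P := by
  let L : Matrix n n ℂ ≃⋆ₐ[ℂ] _ := toEuclideanCLM
  have hnorm : ∀ x, ‖L M x‖ = ‖L P x‖ := fun x => by
    have hL : star (L M) * L M = star (L P) * L P := by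
      simpa only [← map_star, ← map_mul, star_eq_conjTranspose] using congrArg L h
    rw [ContinuousLinearMap.apply_norm_eq_sqrt_inner_adjoint_left,
      ContinuousLinearMap.apply_norm_eq_sqrt_inner_adjoint_left]
    exact congrArg (fun A : _ →L[ℂ] _ => √(RCLike.re (inner ℂ (A x) x))) hL
  obtain ⟨U, hU⟩ :=
    LinearMap.exists_linearIsometry_apply_eq_of_norm_apply_eq (T := (L M).toLinearMap) hnorm
  let u := Unitary.linearIsometryEquiv.symm (U.toLinearIsometryEquiv rfl)
  refine ⟨L.symm u, Unitary.map_mem _ (SetLike.coe_mem u), L.injective ?_⟩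
  change L M = L (L.symm u * P)
  rw [map_mul L (L.symm u) P, L.apply_symm_apply]
  exact ContinuousLinearMap.ext fun x => (hU x).symm

lemma Matrix.exists_mem_unitaryGroup_eq_mul_abs (M : Matrix n n ℂ) :
    ∃ U ∈ unitaryGroup n ℂ, M = U * CFC.abs M := by
  refine exists_mem_unitaryGroup_mul_eq_of_conjTranspose_mul_self_eq ?_
  rw [(nonneg_iff_posSemidef.mp (CFC.abs_nonneg M)).isHermitian.eq, CFC.abs_mul_abs,
    star_eq_conjTranspose]

lemma Matrix.IsHermitian.exists_mem_unitaryGroup_mul_eq_abs {Δ : Matrix n n ℂ}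
    (hΔ : Δ.IsHermitian) :
    ∃ S ∈ unitaryGroup n ℂ, S * Δ = CFC.abs Δ ∧ Δ * S = CFC.abs Δ := by
  have hΔ' : IsSelfAdjoint Δ := hΔ
  set sgn : ℝ → ℝ := fun x => if 0 ≤ x then 1 else -1
  have hcont : ∀ f : ℝ → ℝ, ContinuousOn f (spectrum ℝ Δ) :=
    fun f => (spectrum ℝ Δ).toFinite.continuousOn f
  have hS : cfc sgn Δ * Δ = CFC.abs Δ := by
    have h := cfc_mul sgn (fun x => x) Δ (hcont _) (hcont _)
    rw [cfc_id' ℝ Δ] at h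
    rw [← h, CFC.abs_eq_cfc_norm Δ]
    refine cfc_congr fun x _ => ?_
    by_cases h : 0 ≤ x <;> simp [sgn, h, abs_of_nonneg, abs_of_neg, not_le.mp]
  refine ⟨cfc sgn Δ, ?_, hS, ?_⟩
  · rw [mem_unitaryGroup_iff', ← cfc_star, ← cfc_mul _ _ _ (hcont _) (hcont _), ← cfc_one ℝ Δ]
    refine cfc_congr fun x _ => ?_
    by_cases h : 0 ≤ x <;> simp [sgn, h]
  · have h := (cfc_commute_cfc (fun x => x) sgn Δ).eq
    rwa [cfc_id' ℝ Δ, hS] at h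

lemma Matrix.conjTranspose_mul_self_unitary_mul {W : Matrix n n ℂ} (hW : W ∈ unitaryGroup n ℂ)
    (A : Matrix n n ℂ) : (W * A)ᴴ * (W * A) = Aᴴ * A := by
  rw [conjTranspose_mul, Matrix.mul_assoc, ← Matrix.mul_assoc Wᴴ, ← star_eq_conjTranspose W,
    mem_unitaryGroup_iff'.mp hW, Matrix.one_mul]

lemma Matrix.re_trace_mul_conjTranspose_le (A B : Matrix n n ℂ) :
    (A * Bᴴ).trace.re ≤ √(Aᴴ * A).trace.re * √(Bᴴ * B).trace.re := by
  -- the Hilbert–Schmidt inner product `⟪B, A⟫ = tr (A * 1 * Bᴴ)`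
  let _ := toMatrixSeminormedAddCommGroup (1 : Matrix n n ℂ) PosSemidef.one
  let _ := toMatrixInnerProductSpace (1 : Matrix n n ℂ) PosSemidef.one
  have hnorm : ∀ C : Matrix n n ℂ, ‖C‖ = √(Cᴴ * C).trace.re := fun C => by
    rw [norm_eq_sqrt_re_inner (𝕜 := ℂ)]
    change √(C * 1 * Cᴴ).trace.re = _
    rw [mul_one, trace_mul_comm]
  have h := re_inner_le_norm (𝕜 := ℂ) B A
  rw [hnorm, hnorm] at h
  change (A * 1 * Bᴴ).trace.re ≤ _ at h
  rwa [mul_one, mul_comm √(Bᴴ * B).trace.re] at h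

lemma Matrix.PosSemidef.re_trace_mul_nonneg {P Q : Matrix n n ℂ} (hP : P.PosSemidef)
    (hQ : Q.PosSemidef) : 0 ≤ (P * Q).trace.re := by
  have hR := (nonneg_iff_posSemidef.mp (CFC.sqrt_nonneg P)).isHermitian
  rw [← CFC.sqrt_mul_sqrt_self P hP.nonneg, Matrix.mul_assoc, trace_mul_comm]
  simpa only [hR.eq] using (hQ.conjTranspose_mul_mul_same (CFC.sqrt P)).re_trace_nonneg

lemma Matrix.PosSemidef.re_trace_unitary_mul_le {P W : Matrix n n ℂ} (hP : P.PosSemidef)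
    (hW : W ∈ unitaryGroup n ℂ) : (W * P).trace.re ≤ P.trace.re := by
  set R := CFC.sqrt P
  have hR : Rᴴ = R := (nonneg_iff_posSemidef.mp (CFC.sqrt_nonneg P)).isHermitian.eq
  have hRR : R * R = P := CFC.sqrt_mul_sqrt_self P hP.nonneg
  have h := re_trace_mul_conjTranspose_le (W * R) R
  rwa [conjTranspose_mul_self_unitary_mul hW, hR, hRR, Matrix.mul_assoc, hRR,
    Real.mul_self_sqrt hP.re_trace_nonneg] at h

lemma psqrt_eq_cfcSqrt {M : Matrix n n ℂ} (hM : M.PosSemidef) : psqrt M = CFC.sqrt M := by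
  rw [CFC.sqrt_eq_real_sqrt M hM.nonneg, cfcₙ_eq_cfc, hM.1.cfc_eq]
  simp [psqrt, dif_pos hM, IsHermitian.cfc, Unitary.conjStarAlgAut_apply]

lemma posSemidef_psqrt (M : Matrix n n ℂ) : (psqrt M).PosSemidef := by
  by_cases hM : M.PosSemidef
  · rw [psqrt_eq_cfcSqrt hM]
    exact nonneg_iff_posSemidef.mp (CFC.sqrt_nonneg M)
  · simp only [psqrt, dif_neg hM]
    exact PosSemidef.zero

lemma psqrt_mul_self {M : Matrix n n ℂ} (hM : M.PosSemidef) : psqrt M * psqrt M = M := by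
  rw [psqrt_eq_cfcSqrt hM]
  exact CFC.sqrt_mul_sqrt_self M hM.nonneg

lemma traceNorm_nonneg (M : Matrix n n ℂ) : 0 ≤ traceNorm M :=
  (posSemidef_psqrt _).re_trace_nonneg

lemma traceNorm_eq_re_trace_abs (M : Matrix n n ℂ) : traceNorm M = (CFC.abs M).trace.re := by
  rw [traceNorm, psqrt_eq_cfcSqrt (posSemidef_conjTranspose_mul_self M)]
  rfl

lemma re_trace_unitary_mul_le_traceNorm {W : Matrix n n ℂ} (hW : W ∈ unitaryGroup n ℂ)
    (M : Matrix n n ℂ) : (W * M).trace.re ≤ traceNorm M := by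
  obtain ⟨U, hU, hM⟩ := exists_mem_unitaryGroup_eq_mul_abs M
  calc (W * M).trace.re = ((W * U) * CFC.abs M).trace.re := by rw [Matrix.mul_assoc, ← hM]
    _ ≤ (CFC.abs M).trace.re :=
      (nonneg_iff_posSemidef.mp (CFC.abs_nonneg M)).re_trace_unitary_mul_le
        (Submonoid.mul_mem _ hW hU)
    _ = traceNorm M := (traceNorm_eq_re_trace_abs M).symm

lemma re_trace_le_traceNorm (M : Matrix n n ℂ) : M.trace.re ≤ traceNorm M := by
  simpa only [Matrix.one_mul] using re_trace_unitary_mul_le_traceNorm (Submonoid.one_mem _) M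

lemma exists_mem_unitaryGroup_re_trace_mul_eq_traceNorm (M : Matrix n n ℂ) :
    ∃ W ∈ unitaryGroup n ℂ, (W * M).trace.re = traceNorm M := by
  obtain ⟨U, hU, hM⟩ := exists_mem_unitaryGroup_eq_mul_abs M
  refine ⟨star U, Unitary.star_mem hU, ?_⟩
  rw [traceNorm_eq_re_trace_abs]
  nth_rewrite 1 [hM]
  rw [← Matrix.mul_assoc, mem_unitaryGroup_iff'.mp hU, Matrix.one_mul]

lemma traceNorm_mul_self_sub_le (X Y : Matrix n n ℂ) :
    traceNorm (X * Xᴴ - Y * Yᴴ) ≤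
      √((X - Y)ᴴ * (X - Y)).trace.re * √((X + Y)ᴴ * (X + Y)).trace.re := by
  obtain ⟨W, hW, hWtr⟩ := exists_mem_unitaryGroup_re_trace_mul_eq_traceNorm (X * Xᴴ - Y * Yᴴ)
  have hsplit : W * (X * Xᴴ - Y * Yᴴ) + W * (X * Xᴴ - Y * Yᴴ) =
      W * (X - Y) * (X + Y)ᴴ + W * (X + Y) * (X - Y)ᴴ := by
    rw [conjTranspose_add, conjTranspose_sub]
    noncomm_ring
  have h := congrArg (fun M => M.trace.re) hsplit
  simp only [trace_add, Complex.add_re, hWtr] at h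
  have h₁ := re_trace_mul_conjTranspose_le (W * (X - Y)) (X + Y)
  have h₂ := re_trace_mul_conjTranspose_le (W * (X + Y)) (X - Y)
  rw [conjTranspose_mul_self_unitary_mul hW] at h₁ h₂
  linarith

lemma re_trace_sub_sq_le_traceNorm_sq_sub_sq {A B : Matrix n n ℂ} (hA : A.PosSemidef)
    (hB : B.PosSemidef) : ((A - B) ^ 2).trace.re ≤ traceNorm (A ^ 2 - B ^ 2) := by
  have hΔ : (A - B).IsHermitian := hA.1.sub hB.1
  obtain ⟨S, hS, hSΔ, hΔS⟩ := hΔ.exists_mem_unitaryGroup_mul_eq_abs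
  set T := CFC.abs (A - B)
  have hT_sub : (T - (A - B)).PosSemidef := by
    rw [CFC.abs_sub_self _ hΔ]
    exact nonneg_iff_posSemidef.mp (smul_nonneg zero_le_two (CFC.negPart_nonneg _))
  have hT_add : (T + (A - B)).PosSemidef := by
    rw [CFC.abs_add_self _ hΔ]
    exact nonneg_iff_posSemidef.mp (smul_nonneg zero_le_two (CFC.posPart_nonneg _))
  -- `2 (A² - B²) = (A - B)(A + B) + (A + B)(A - B)`, and `S` turns both terms into `T (A + B)`
  have hS_tr : (S * (A ^ 2 - B ^ 2)).trace.re = (T * (A + B)).trace.re := by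
    have e : S * (A ^ 2 - B ^ 2) + S * (A ^ 2 - B ^ 2) =
        S * (A - B) * (A + B) + S * (A + B) * (A - B) := by noncomm_ring
    have h := congrArg (fun M => M.trace.re) e
    simp only [trace_add, Complex.add_re] at h
    rw [hSΔ, trace_mul_comm (S * (A + B)), ← Matrix.mul_assoc, hΔS] at h
    linarith
  have hT_tr : ((A - B) ^ 2).trace.re ≤ (T * (A + B)).trace.re := by
    have e : T * (A + B) = (A - B) ^ 2 + ((T - (A - B)) * A + (T + (A - B)) * B) := by
      noncomm_ring
    rw [e, trace_add, trace_add, Complex.add_re, Complex.add_re]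
    linarith [hT_sub.re_trace_mul_nonneg hA, hT_add.re_trace_mul_nonneg hB]
  linarith [re_trace_unitary_mul_le_traceNorm hS (A ^ 2 - B ^ 2)]

lemma Matrix.re_trace_conjTranspose_mul_sub_self (X Y : Matrix n n ℂ) :
    ((X - Y)ᴴ * (X - Y)).trace.re =
      (Xᴴ * X).trace.re + (Yᴴ * Y).trace.re - 2 * (Yᴴ * X).trace.re := by
  have e : (X - Y)ᴴ * (X - Y) = Xᴴ * X + Yᴴ * Y - ((Yᴴ * X)ᴴ + Yᴴ * X) := by
    rw [conjTranspose_sub, conjTranspose_mul, conjTranspose_conjTranspose]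
    noncomm_ring
  rw [e, trace_sub, trace_add, trace_add, trace_conjTranspose]
  simp only [Complex.sub_re, Complex.add_re, Complex.star_def, Complex.conj_re]
  ring

lemma Matrix.re_trace_conjTranspose_mul_add_self (X Y : Matrix n n ℂ) :
    ((X + Y)ᴴ * (X + Y)).trace.re =
      (Xᴴ * X).trace.re + (Yᴴ * Y).trace.re + 2 * (Yᴴ * X).trace.re := by
  have e : (X + Y)ᴴ * (X + Y) = Xᴴ * X + Yᴴ * Y + ((Yᴴ * X)ᴴ + Yᴴ * X) := by
    rw [conjTranspose_add, conjTranspose_mul, conjTranspose_conjTranspose]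
    noncomm_ring
  rw [e, trace_add, trace_add, trace_add, trace_conjTranspose]
  simp only [Complex.add_re, Complex.star_def, Complex.conj_re]
  ring

lemma fidelity_nonneg (ρ σ : Matrix n n ℂ) : 0 ≤ fidelity ρ σ :=
  (posSemidef_psqrt _).re_trace_nonneg

lemma traceDist_nonneg (ρ σ : Matrix n n ℂ) : 0 ≤ traceDist ρ σ :=
  mul_nonneg (by norm_num) (traceNorm_nonneg _)

lemma fidelity_eq_traceNorm (ρ : Matrix n n ℂ) {σ : Matrix n n ℂ} (hσ : σ.PosSemidef) :
    fidelity ρ σ = traceNorm (psqrt σ * psqrt ρ) := by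
  have e : (psqrt σ * psqrt ρ)ᴴ * (psqrt σ * psqrt ρ) = psqrt ρ * σ * psqrt ρ := by
    rw [conjTranspose_mul, (posSemidef_psqrt σ).1.eq, (posSemidef_psqrt ρ).1.eq,
      Matrix.mul_assoc, ← Matrix.mul_assoc (psqrt σ), psqrt_mul_self hσ, Matrix.mul_assoc]
  rw [fidelity, traceNorm, e]

lemma one_sub_traceDist_le_fidelity {ρ σ : Matrix n n ℂ} (hρ : ρ.PosSemidef)
    (hσ : σ.PosSemidef) (hρ_tr : ρ.trace = 1) (hσ_tr : σ.trace = 1) :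
    1 - traceDist ρ σ ≤ fidelity ρ σ := by
  set X := psqrt ρ
  set Y := psqrt σ
  have hX : Xᴴ = X := (posSemidef_psqrt ρ).1.eq
  have hY : Yᴴ = Y := (posSemidef_psqrt σ).1.eq
  have hXX : X ^ 2 = ρ := (sq X).trans (psqrt_mul_self hρ)
  have hYY : Y ^ 2 = σ := (sq Y).trans (psqrt_mul_self hσ)
  have hPS : ((X - Y) ^ 2).trace.re ≤ traceNorm (X ^ 2 - Y ^ 2) :=
    re_trace_sub_sq_le_traceNorm_sq_sub_sq (posSemidef_psqrt ρ) (posSemidef_psqrt σ)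
  have hexp := re_trace_conjTranspose_mul_sub_self X Y
  simp only [conjTranspose_sub, hX, hY, ← sq] at hexp
  rw [hXX, hYY, hρ_tr, hσ_tr, Complex.one_re] at hexp
  rw [hXX, hYY, hexp] at hPS
  have hF : (Y * X).trace.re ≤ fidelity ρ σ :=
    (fidelity_eq_traceNorm ρ hσ).symm ▸ re_trace_le_traceNorm (Y * X)
  rw [traceDist]
  linarith

lemma fidelity_sq_add_traceDist_sq_le_one {ρ σ : Matrix n n ℂ} (hρ : ρ.PosSemidef)
    (hσ : σ.PosSemidef) (hρ_tr : ρ.trace = 1) (hσ_tr : σ.trace = 1) :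
    fidelity ρ σ ^ 2 + traceDist ρ σ ^ 2 ≤ 1 := by
  set X := psqrt ρ
  obtain ⟨W, hW, hWtr⟩ := exists_mem_unitaryGroup_re_trace_mul_eq_traceNorm (psqrt σ * X)
  -- `Y = √σ W*` still has `Y Y* = σ`, and `W` is chosen so that `Re tr (Y* X)` is the fidelity
  set Y := psqrt σ * Wᴴ
  have hX : Xᴴ = X := (posSemidef_psqrt ρ).1.eq
  have hXX : X * Xᴴ = ρ := hX.symm ▸ psqrt_mul_self hρ
  have hYY : Y * Yᴴ = σ := by
    rw [conjTranspose_mul, conjTranspose_conjTranspose, (posSemidef_psqrt σ).1.eq,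
      Matrix.mul_assoc, ← Matrix.mul_assoc Wᴴ, ← star_eq_conjTranspose,
      mem_unitaryGroup_iff'.mp hW, Matrix.one_mul, psqrt_mul_self hσ]
  have hYX : (Yᴴ * X).trace.re = fidelity ρ σ := by
    rw [fidelity_eq_traceNorm ρ hσ, ← hWtr, conjTranspose_mul, conjTranspose_conjTranspose,
      (posSemidef_psqrt σ).1.eq, Matrix.mul_assoc]
  have hXX' : (Xᴴ * X).trace.re = 1 := by
    rw [trace_mul_comm, hXX, hρ_tr, Complex.one_re]
  have hYY' : (Yᴴ * Y).trace.re = 1 := by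
    rw [trace_mul_comm, hYY, hσ_tr, Complex.one_re]
  have hsub := re_trace_conjTranspose_mul_sub_self X Y
  have hadd := re_trace_conjTranspose_mul_add_self X Y
  rw [hXX', hYY', hYX] at hsub hadd
  have hbound := traceNorm_mul_self_sub_le X Y
  have hsub_nonneg := (posSemidef_conjTranspose_mul_self (X - Y)).re_trace_nonneg
  have hadd_nonneg := (posSemidef_conjTranspose_mul_self (X + Y)).re_trace_nonneg
  rw [hsub] at hsub_nonneg
  rw [hadd] at hadd_nonneg
  rw [hXX, hYY, hsub, hadd, ← Real.sqrt_mul hsub_nonneg,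
    Real.le_sqrt (traceNorm_nonneg _) (mul_nonneg hsub_nonneg hadd_nonneg)] at hbound
  rw [traceDist]
  nlinarith

end

lemma one_sub_ciSup_le_ciInf {ι : Type*} [Nonempty ι] {f g : ι → ℝ}
    (hg : BddAbove (Set.range g)) (h : ∀ i, 1 - g i ≤ f i) : 1 - ⨆ i, g i ≤ ⨅ i, f i :=
  le_ciInf fun i => by linarith [le_ciSup hg i, h i]

lemma sq_ciInf_add_sq_ciSup_le_one {ι : Type*} [Nonempty ι] {f g : ι → ℝ}
    (hf : ∀ i, 0 ≤ f i) (hg : ∀ i, 0 ≤ g i) (h : ∀ i, f i ^ 2 + g i ^ 2 ≤ 1) :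
    (⨅ i, f i) ^ 2 + (⨆ i, g i) ^ 2 ≤ 1 := by
  obtain ⟨i₀⟩ := ‹Nonempty ι›
  set a := ⨅ i, f i
  have ha : 0 ≤ a := le_ciInf hf
  have ha_le : ∀ i, a ≤ f i := ciInf_le ⟨0, Set.forall_mem_range.mpr hf⟩
  have ha_sq : 0 ≤ 1 - a ^ 2 := by nlinarith [h i₀, ha_le i₀, sq_nonneg (g i₀)]
  have hg_le : ⨆ i, g i ≤ √(1 - a ^ 2) := ciSup_le fun i =>
    (Real.le_sqrt (hg i) ha_sq).mpr (by nlinarith [h i, ha_le i])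
  have hb : 0 ≤ ⨆ i, g i := Real.iSup_nonneg hg
  nlinarith [(Real.le_sqrt hb ha_sq).mp hg_le]

theorem fuchs_vandeGraaf_ciInf_ciSup {n ι : Type*} [Fintype n] [DecidableEq n] [Nonempty ι]
    {r s : ι → Matrix n n ℂ} (hr : ∀ i, (r i).PosSemidef) (hs : ∀ i, (s i).PosSemidef)
    (hr_tr : ∀ i, (r i).trace = 1) (hs_tr : ∀ i, (s i).trace = 1) :
    1 - (⨆ i, traceDist (r i) (s i)) ≤ ⨅ i, fidelity (r i) (s i) ∧
      ⨅ i, fidelity (r i) (s i) ≤ √(1 - (⨆ i, traceDist (r i) (s i)) ^ 2) := by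
  have hupper i := fidelity_sq_add_traceDist_sq_le_one (hr i) (hs i) (hr_tr i) (hs_tr i)
  have hbdd : BddAbove (Set.range fun i => traceDist (r i) (s i)) :=
    ⟨1, Set.forall_mem_range.mpr fun i => by nlinarith [hupper i, fidelity_nonneg (r i) (s i)]⟩
  refine ⟨one_sub_ciSup_le_ciInf hbdd fun i =>
    one_sub_traceDist_le_fidelity (hr i) (hs i) (hr_tr i) (hs_tr i), ?_⟩
  refine Real.le_sqrt_of_sq_le ?_
  linarith [sq_ciInf_add_sq_ciSup_le_one (fun i => fidelity_nonneg (r i) (s i))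
    (fun i => traceDist_nonneg (r i) (s i)) hupper]

section Hadamard

variable {X : Type*} [Fintype X] {ρ : Matrix X X ℂ}

lemma Matrix.PosSemidef.hadamard_outerMat (hρ : ρ.PosSemidef) (u : X → ℂ) :
    (ρ ⊙ outerMat u).PosSemidef :=
  hρ.hadamard (posSemidef_vecMulVec_self_star u)

lemma trace_hadamard_outerMat (hρ : ∀ x, ρ x x = 1) {u : X → ℂ} (hu : ∑ x, ‖u x‖ ^ 2 = 1) :
    (ρ ⊙ outerMat u).trace = 1 := by
  simp only [trace, diag, hadamard_apply, outerMat, hρ, one_mul, Complex.mul_conj,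
    Complex.normSq_eq_norm_sq]
  exact_mod_cast hu

end Hadamard

theorem stmt5
    {X : Type*} [Fintype X] [DecidableEq X] [Nonempty X]
    (ρ σ : Matrix X X ℂ)
    (hρ : ρ.PosSemidef) (hρdiag : ∀ x, ρ x x = 1)
    (hσ : σ.PosSemidef) (hσdiag : ∀ x, σ x x = 1) :
    1 - DH ρ σ ≤ FH ρ σ ∧ FH ρ σ ≤ Real.sqrt (1 - DH ρ σ ^ 2) := by
  obtain ⟨x₀⟩ := ‹Nonempty X›
  have : Nonempty { u : X → ℂ // ∑ x, ‖u x‖ ^ 2 = 1 } := ⟨⟨Pi.single x₀ 1, by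
    rw [Finset.sum_eq_single x₀ (fun x _ hx => by simp [hx]) (by simp)]
    simp⟩⟩
  exact fuchs_vandeGraaf_ciInf_ciSup (ι := { u : X → ℂ // ∑ x, ‖u x‖ ^ 2 = 1 })
    (r := fun u => ρ ⊙ outerMat u.1) (s := fun u => σ ⊙ outerMat u.1)
    (fun u => hρ.hadamard_outerMat u.1) (fun u => hσ.hadamard_outerMat u.1)
    (fun u => trace_hadamard_outerMat hρdiag u.2) (fun u => trace_hadamard_outerMat hσdiag u.2)
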